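/- arXiv:2403.15799 — 2 statements merged into one kernel-verified Lean document; each statement's English description precedes it below -/
import Mathlib

section
/- Let X be a set with a family 𝓑 = ⋃ₙ 𝓑ₙ of nonempty open subsets of a topological space X such that each 𝓑ₙ is pairwise disjoint and 𝓑 is a π-base, and suppose every point of a dense set D ⊆ X has countable character. Then X has cellularity at least |𝓑ₙ| for each n; consequently, if |𝓑| ≥ κ for an uncountable cardinal κ of uncountable cofinality, then X has a cellular family of size κ. -/
/-- A π-base for `X`: a family of nonempty open sets such that every nonempty open set
contains a member of the family. -/
def IsPiBase (X : Type*) [TopologicalSpace X] (𝓟 : Set (Set X)) : Prop :=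
  (∀ P ∈ 𝓟, IsOpen P ∧ P.Nonempty) ∧ ∀ U : Set X, IsOpen U → U.Nonempty → ∃ P ∈ 𝓟, P ⊆ U

/-- The π-weight of `X`: the least cardinality of a π-base. -/
noncomputable def piWeight (X : Type*) [TopologicalSpace X] : Cardinal :=
  sInf {c | ∃ 𝓟 : Set (Set X), IsPiBase X 𝓟 ∧ c = Cardinal.mk 𝓟}

/-- A cellular family: a pairwise disjoint family of nonempty open sets. -/
def IsCellular {X : Type*} [TopologicalSpace X] (𝓤 : Set (Set X)) : Prop :=
  (∀ U ∈ 𝓤, IsOpen U ∧ U.Nonempty) ∧ 𝓤.PairwiseDisjoint id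

/-- The cellularity of `X`: the supremum of the cardinalities of cellular families. -/
noncomputable def cellularity (X : Type*) [TopologicalSpace X] : Cardinal :=
  ⨆ 𝓤 : {𝓤 : Set (Set X) // IsCellular 𝓤}, Cardinal.mk 𝓤.1

/-!
Each `𝓑ₙ` is a pairwise disjoint subfamily of a π-base, hence itself cellular, which gives the
first part. When `cf κ > ω`, a countable union of families each of size `< κ` has size `< κ`,
so some `𝓑ₙ` has at least `κ` members, and any `κ` of them form a cellular family.
-/

open Cardinal

theorem Cardinal.exists_le_mk_of_le_mk_iUnion {α : Type u} {ι : Type v} [Countable ι]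
    {κ : Cardinal.{u}} (hκ : ℵ₀ < κ.ord.cof) (s : ι → Set α) (h : κ ≤ #(⋃ i, s i)) :
    ∃ i, κ ≤ #(s i) := by
  by_contra! hlt
  have hι : lift.{u} #ι ≤ ℵ₀ := lift_le_aleph0.2 mk_le_aleph0
  have hsup : ⨆ i, #(s i) < κ := by
    refine lift_iSup_lt_of_lt_cof_ord ?_ hlt
    rw [← lift_ord, ← Ordinal.lift_cof]
    exact hι.trans_lt (aleph0_lt_lift.2 hκ)
  have hκ' : ℵ₀ < lift.{v} κ := aleph0_lt_lift.2 (hκ.trans_le (Ordinal.cof_ord_le κ))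
  have hprod : lift.{u} #ι * ⨆ i, lift.{v} #(s i) < lift.{v} κ := by
    rw [← lift_iSup bddAbove_of_small]
    exact mul_lt_of_lt hκ'.le (hι.trans_lt hκ') (lift_lt.2 hsup)
  exact ((lift_le.2 h).trans (mk_iUnion_le_lift s)).not_gt hprod

section Cellular

variable {X : Type u} [TopologicalSpace X] {𝓤 𝓥 : Set (Set X)}

theorem IsPiBase.isCellular_of_subset (h𝓤 : IsPiBase X 𝓤) (hsub : 𝓥 ⊆ 𝓤)
    (hdisj : 𝓥.PairwiseDisjoint id) : IsCellular 𝓥 :=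
  ⟨fun V hV => h𝓤.1 V (hsub hV), hdisj⟩

theorem IsCellular.mono (h𝓤 : IsCellular 𝓤) (hsub : 𝓥 ⊆ 𝓤) : IsCellular 𝓥 :=
  ⟨fun V hV => h𝓤.1 V (hsub hV), h𝓤.2.subset hsub⟩

theorem IsCellular.mk_le_cellularity (h𝓤 : IsCellular 𝓤) : #𝓤 ≤ cellularity X :=
  le_ciSup bddAbove_of_small (⟨𝓤, h𝓤⟩ : {𝓤 : Set (Set X) // IsCellular 𝓤})

theorem IsCellular.exists_mk_eq_of_le (h𝓤 : IsCellular 𝓤) {κ : Cardinal.{u}} (hκ : κ ≤ #𝓤) :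
    ∃ 𝓥 : Set (Set X), IsCellular 𝓥 ∧ #𝓥 = κ := by
  obtain ⟨𝓥, hsub, h𝓥⟩ := le_mk_iff_exists_subset.mp hκ
  exact ⟨𝓥, h𝓤.mono hsub, h𝓥⟩

end Cellular

theorem stmt18_general {X : Type u} [TopologicalSpace X] (𝓑 : ℕ → Set (Set X))
    (hpb : IsPiBase X (⋃ n, 𝓑 n)) (hdisj : ∀ n, (𝓑 n).PairwiseDisjoint id) :
    (∀ n, Cardinal.mk (𝓑 n) ≤ cellularity X) ∧
    ∀ κ : Cardinal.{u}, Cardinal.aleph0 < κ → Cardinal.aleph0 < κ.ord.cof →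
      κ ≤ Cardinal.mk (⋃ n, 𝓑 n) → ∃ 𝓤 : Set (Set X), IsCellular 𝓤 ∧ Cardinal.mk 𝓤 = κ := by
  have hcell n : IsCellular (𝓑 n) :=
    hpb.isCellular_of_subset (Set.subset_iUnion 𝓑 n) (hdisj n)
  refine ⟨fun n => (hcell n).mk_le_cellularity, fun κ _ hcof hle => ?_⟩
  obtain ⟨n, hn⟩ := exists_le_mk_of_le_mk_iUnion hcof 𝓑 hle
  exact (hcell n).exists_mk_eq_of_le hn

/-- If `X` has a σ-disjoint π-base `𝓑 = ⋃ₙ 𝓑ₙ` and a dense set of points of countable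
character, then the cellularity of `X` is at least `|𝓑ₙ|` for each `n`; consequently, if
`|𝓑| ≥ κ` for an uncountable cardinal `κ` of uncountable cofinality, then `X` has a cellular
family of size `κ`. -/
theorem stmt18 {X : Type u} [TopologicalSpace X] (𝓑 : ℕ → Set (Set X))
    (hpb : IsPiBase X (⋃ n, 𝓑 n)) (hdisj : ∀ n, (𝓑 n).PairwiseDisjoint id)
    (D : Set X) (hD : Dense D) (hchar : ∀ x ∈ D, (nhds x).IsCountablyGenerated) :
    (∀ n, Cardinal.mk (𝓑 n) ≤ cellularity X) ∧
    ∀ κ : Cardinal.{u}, Cardinal.aleph0 < κ → Cardinal.aleph0 < κ.ord.cof →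
      κ ≤ Cardinal.mk (⋃ n, 𝓑 n) → ∃ 𝓤 : Set (Set X), IsCellular 𝓤 ∧ Cardinal.mk 𝓤 = κ :=
  stmt18_general 𝓑 hpb hdisj
end

section
/- Let Y be a topological space and ω ≤ μ a cardinal, and suppose Y^ω has a cellular family of size κ where κ ≥ πw(Y). Let X be a space with πw(X) ≤ κ and μ ≤ πw(X). Then X × Y^μ has a σ-disjoint π-base (a π-base that is a countable union of pairwise disjoint families). -/
/-!
Take π-bases `𝓟` of `X` and `𝓠` of `Y` of minimal size. The boxes `P × {y | y j ∈ Q j, j ∈ F}`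
(`P ∈ 𝓟`, `F ⊆ ι` finite, `Q j ∈ 𝓠`) form a π-base of `X × Y^ι` of size at most `κ`, so each
box `B` can be labelled injectively by a cell `g B ∈ 𝓤`. Embed `ℕ × ℕ` into `ι`: the rows are
countably many disjoint copies of `ω`, and each box leaves some row `n B` unconstrained. Hence
`B ∩ (projection to row n B)⁻¹ (g B)` is a nonempty open subset of `B`, and the shrunk boxes
with the same free row `n` are pairwise disjoint because their cells are.
-/

universe u

open Set Function Cardinal

def HasSigmaDisjointPiBase (Z : Type*) [TopologicalSpace Z] : Prop :=
  ∃ 𝓑 : ℕ → Set (Set Z), IsPiBase Z (⋃ n, 𝓑 n) ∧ ∀ n, (𝓑 n).PairwiseDisjoint id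

theorem exists_isPiBase_mk_eq_piWeight (X : Type*) [TopologicalSpace X] :
    ∃ 𝓟 : Set (Set X), IsPiBase X 𝓟 ∧ #𝓟 = piWeight X := by
  have hne : {c | ∃ 𝓟 : Set (Set X), IsPiBase X 𝓟 ∧ c = #𝓟}.Nonempty :=
    ⟨_, {U | IsOpen U ∧ U.Nonempty}, ⟨fun _ hP => hP, fun U hU hUne => ⟨U, ⟨hU, hUne⟩, rfl.subset⟩⟩,
      rfl⟩
  obtain ⟨𝓟, h𝓟, hc⟩ := csInf_mem hne
  exact ⟨𝓟, h𝓟, hc.symm⟩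

theorem IsPiBase.prod {X Y I J : Type*} [TopologicalSpace X] [TopologicalSpace Y]
    {p : I → Set X} {q : J → Set Y} (hp : IsPiBase X (range p)) (hq : IsPiBase Y (range q)) :
    IsPiBase (X × Y) (range fun i : I × J => p i.1 ×ˢ q i.2) := by
  refine ⟨?_, fun U hU ⟨z, hz⟩ => ?_⟩
  · rintro _ ⟨⟨i, j⟩, rfl⟩
    obtain ⟨hpo, hpn⟩ := hp.1 _ (mem_range_self i)
    obtain ⟨hqo, hqn⟩ := hq.1 _ (mem_range_self j)
    exact ⟨hpo.prod hqo, hpn.prod hqn⟩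
  obtain ⟨V, W, hV, hW, hzV, hzW, hVW⟩ := isOpen_prod_iff.mp hU z.1 z.2 hz
  obtain ⟨_, ⟨i, rfl⟩, hi⟩ := hp.2 V hV ⟨z.1, hzV⟩
  obtain ⟨_, ⟨j, rfl⟩, hj⟩ := hq.2 W hW ⟨z.2, hzW⟩
  exact ⟨_, ⟨(i, j), rfl⟩, (prod_mono hi hj).trans hVW⟩

def finCylinder {ι Y : Type*} (F : Finset ι) (Q : F → Set Y) : Set (ι → Y) :=
  {y | ∀ j : F, y j ∈ Q j}

theorem IsPiBase.pi_finCylinder {ι Y : Type*} [TopologicalSpace Y] [Nonempty Y]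
    {𝓠 : Set (Set Y)} (h𝓠 : IsPiBase Y 𝓠) :
    IsPiBase (ι → Y) (range fun c : Σ F : Finset ι, F → 𝓠 => finCylinder c.1 fun j => c.2 j) := by
  refine ⟨?_, fun U hU ⟨y, hy⟩ => ?_⟩
  · rintro _ ⟨⟨F, Q⟩, rfl⟩
    have hQ j := h𝓠.1 _ (Q j).2
    refine ⟨?_, ?_⟩
    · simp only [finCylinder, ofPred_forall]
      exact isOpen_iInter_of_finite fun j => (hQ j).1.preimage (continuous_apply _)
    · classical
      refine ⟨fun j => if h : j ∈ F then (hQ ⟨j, h⟩).2.some else Classical.arbitrary Y, ?_⟩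
      intro j
      simpa only [dif_pos j.2] using (hQ j).2.some_mem
  obtain ⟨F, u, hu, hFu⟩ := isOpen_pi_iff.mp hU y hy
  choose Q hQ𝓠 hQu using fun j : F => h𝓠.2 (u j) (hu j j.2).1 ⟨y j, (hu j j.2).2⟩
  refine ⟨_, ⟨⟨F, fun j => ⟨Q j, hQ𝓠 j⟩⟩, rfl⟩, fun z hz => hFu fun j hj => ?_⟩
  exact hQu ⟨j, hj⟩ (hz ⟨j, hj⟩)

theorem surjOn_comp_finCylinder {ι K Y : Type*} {r : K → ι} (hr : Injective r) {F : Finset ι}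
    (hF : ∀ k, r k ∉ F) {Q : F → Set Y} (hQ : (finCylinder F Q).Nonempty) :
    SurjOn (fun y k => y (r k)) (finCylinder F Q) univ := by
  rintro w -
  obtain ⟨y, hy⟩ := hQ
  refine ⟨extend r w y, fun j => ?_, funext (hr.extend_apply w y)⟩
  rw [extend_apply' _ _ _ fun ⟨k, hk⟩ => hF k (hk ▸ j.2)]
  exact hy j

theorem Finset.exists_forall_row_notMem {ι : Type*} {e : ℕ × ℕ → ι} (he : Injective e)
    (F : Finset ι) : ∃ n, ∀ k, e (n, k) ∉ F := by
  obtain ⟨n, hn⟩ := Infinite.exists_notMem_finset ((F.preimage e he.injOn).image Prod.fst)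
  exact ⟨n, fun k hk => hn (mem_image.2 ⟨(n, k), mem_preimage.2 hk, rfl⟩)⟩

theorem hasSigmaDisjointPiBase_of_surjOn {Z W I : Type*} [TopologicalSpace Z]
    [TopologicalSpace W] {𝓤 : Set (Set W)} (h𝓤 : IsCellular 𝓤) (g : I ↪ 𝓤) {b : I → Set Z}
    (hb : IsPiBase Z (range b)) {φ : ℕ → Z → W} (hφ : ∀ n, Continuous (φ n))
    (hbφ : ∀ i, ∃ n, SurjOn (φ n) (b i) univ) : HasSigmaDisjointPiBase Z := by
  choose m hm using hbφ
  set D : I → Set Z := fun i => b i ∩ φ (m i) ⁻¹' g i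
  refine ⟨fun n => D '' {i | m i = n}, ⟨?_, fun U hU hUne => ?_⟩, ?_⟩
  · simp only [mem_iUnion, mem_image]
    rintro _ ⟨n, i, -, rfl⟩
    obtain ⟨hgo, w, hw⟩ := h𝓤.1 _ (g i).2
    obtain ⟨z, hz, rfl⟩ := hm i (mem_univ w)
    exact ⟨(hb.1 _ (mem_range_self i)).1.inter (hgo.preimage (hφ _)), z, hz, hw⟩
  · obtain ⟨_, ⟨i, rfl⟩, hi⟩ := hb.2 U hU hUne
    exact ⟨D i, mem_iUnion.2 ⟨m i, mem_image_of_mem _ rfl⟩, inter_subset_left.trans hi⟩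
  · rintro n _ ⟨i, rfl, rfl⟩ _ ⟨j, hj, rfl⟩ hne
    have hgij : Disjoint (g i : Set W) (g j) :=
      h𝓤.2 (g i).2 (g j).2 fun h => hne (by rw [g.injective (Subtype.ext h)])
    exact (hgij.preimage _).mono inter_subset_right fun z hz => hj ▸ hz.2

theorem Cardinal.mk_sigma_finset_arrow_le {ι α : Type u} [Infinite ι] {κ : Cardinal.{u}}
    (hκ : ℵ₀ ≤ κ) (hι : #ι ≤ κ) (hα : #α ≤ κ) : #(Σ F : Finset ι, F → α) ≤ κ := by
  have hF (F : Finset ι) : #(F → α) ≤ κ := by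
    rw [← power_def, mk_coe_finset]
    exact (power_le_power_right hα).trans (by rw [power_natCast]; exact power_nat_le hκ)
  calc #(Σ F : Finset ι, F → α) ≤ sum fun _ : Finset ι => κ :=
        (mk_sigma _).trans_le (sum_le_sum _ _ hF)
    _ = #(Finset ι) * κ := sum_const' _ _
    _ ≤ κ * κ := by rw [mk_finset_of_infinite]; gcongr
    _ = κ := mul_eq_self hκ

/-- Lemma 2.2 of the paper: let `Y` be a space such that `Y^ω` has a cellular family of size
`κ ≥ πw(Y)`, and let `X` be a space with `πw(X) ≤ κ`. Then for every index set `ι` with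
`ω ≤ |ι| ≤ πw(X)`, the product `X × Y^ι` has a σ-disjoint π-base. -/
theorem stmt19 {X Y : Type u} [TopologicalSpace X] [TopologicalSpace Y] (ι : Type u)
    (κ : Cardinal.{u}) (𝓤 : Set (Set (ℕ → Y))) (hcell : IsCellular 𝓤)
    (hcard : Cardinal.mk 𝓤 = κ) (hY : piWeight Y ≤ κ) (hX : piWeight X ≤ κ)
    (hι₁ : Cardinal.aleph0 ≤ Cardinal.mk ι) (hι₂ : Cardinal.mk ι ≤ piWeight X) :
    ∃ 𝓑 : ℕ → Set (Set (X × (ι → Y))),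
      IsPiBase (X × (ι → Y)) (⋃ n, 𝓑 n) ∧ ∀ n, (𝓑 n).PairwiseDisjoint id := by
  obtain ⟨𝓟, h𝓟, h𝓟card⟩ := exists_isPiBase_mk_eq_piWeight X
  obtain ⟨𝓠, h𝓠, h𝓠card⟩ := exists_isPiBase_mk_eq_piWeight Y
  have hκ : ℵ₀ ≤ κ := hι₁.trans (hι₂.trans hX)
  have : Infinite ι := aleph0_le_mk_iff.mp hι₁
  obtain ⟨U, hU⟩ : 𝓤.Nonempty :=
    nonempty_coe_sort.mp (mk_ne_zero_iff.mp (hcard ▸ (aleph0_pos.trans_le hκ).ne'))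
  have : Nonempty Y := ⟨(hcell.1 U hU).2.some 0⟩
  obtain ⟨g⟩ : Nonempty (𝓟 × (Σ F : Finset ι, F → 𝓠) ↪ 𝓤) := by
    rw [← le_def, hcard, mk_prod, lift_id, lift_id, ← mul_eq_self hκ, h𝓟card]
    exact mul_le_mul' hX (mk_sigma_finset_arrow_le hκ (hι₂.trans hX) (h𝓠card.trans_le hY))
  obtain ⟨e, he⟩ : ∃ e : ℕ × ℕ → ι, Injective e :=
    ⟨_, (Nat.pairEquiv.toEmbedding.trans (Infinite.natEmbedding ι)).injective⟩
  have h𝓟' : IsPiBase X (range ((↑) : 𝓟 → Set X)) := by rwa [Subtype.range_coe]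
  refine hasSigmaDisjointPiBase_of_surjOn hcell g (h𝓟'.prod (h𝓠.pi_finCylinder (ι := ι)))
    (φ := fun n z k => z.2 (e (n, k))) (fun n => by fun_prop) fun ⟨P, F, Q⟩ => ?_
  obtain ⟨n, hn⟩ := F.exists_forall_row_notMem he
  have hcyl : (finCylinder F fun j => (Q j : Set Y)).Nonempty :=
    (h𝓠.pi_finCylinder.1 _ ⟨⟨F, Q⟩, rfl⟩).2
  exact ⟨n, (surjOn_comp_finCylinder (he.comp (Prod.mk_right_injective n)) hn hcyl).comp
    (prod_surjOn_snd (h𝓟.1 P P.2).2)⟩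
end
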